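/- Let X be a finitely supported subset of an invariant set with X not FSM uniformly infinite (no infinite uniformly supported subset). Then every finitely supported inclusion-order-preserving function f : ℘_us(X) → ℘_us(X) has a least fixed point, which is supported by supp(f) ∪ supp(X). -/

import Mathlib

open Pointwise

/-- The group of finitary permutations of the set `A` of atoms:
bijections of `A` that move only finitely many atoms. -/
def finPerm (A : Type*) : Subgroup (Equiv.Perm A) where
  carrier := {π | {a | π a ≠ a}.Finite}
  one_mem' := by simp
  mul_mem' := by
    intro π σ hπ hσ
    apply Set.Finite.subset (hπ.union hσ)
    intro a ha
    by_contra hc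
    simp only [Set.mem_union, Set.mem_setOf_eq, not_or, not_not] at hc
    exact ha (by simp [Equiv.Perm.mul_apply, hc.1, hc.2])
  inv_mem' := by
    intro π hπ
    apply Set.Finite.subset hπ
    intro a ha
    simp only [Set.mem_setOf_eq] at ha ⊢
    intro h
    exact ha (Equiv.Perm.inv_eq_iff_eq.mpr h.symm)

/-- `x` is finitely supported: some finite set of atoms supports it. -/
def FinitelySupported (A : Type*) {X : Type*} [MulAction (finPerm A) X] (x : X) : Prop :=
  ∃ S : Set A, S.Finite ∧ MulAction.Supports (finPerm A) S x

/-- A subset `Z` of an `S_A`-set is uniformly supported if a single finite set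
of atoms supports every element of `Z`. -/
def UniformlySupported (A : Type*) {X : Type*} [MulAction (finPerm A) X] (Z : Set X) : Prop :=
  ∃ S : Set A, S.Finite ∧ ∀ x ∈ Z, MulAction.Supports (finPerm A) S x

/-- The least support of `x`: the intersection of all finite sets of atoms supporting `x`. -/
noncomputable def supp (A : Type*) {X : Type*} [MulAction (finPerm A) X] (x : X) : Set A :=
  ⋂₀ {S : Set A | S.Finite ∧ MulAction.Supports (finPerm A) S x}

/-- `Z` contains no infinite uniformly supported subset
(`Z` is "FSM non-uniformly infinite"). -/
def NoInfUS (A : Type*) {X : Type*} [MulAction (finPerm A) X] (Z : Set X) : Prop :=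
  ∀ W ⊆ Z, UniformlySupported A W → W.Finite

/-- The uniform powerset `℘_us(X)`: all uniformly supported subsets of `X`. -/
def usPowerset (A : Type*) {X : Type*} [MulAction (finPerm A) X] (Z : Set X) : Set (Set X) :=
  {W | W ⊆ Z ∧ UniformlySupported A W}

/-- The finite powerset `℘_fin(X)`: all finite subsets of `X`. -/
def finPowerset {X : Type*} (Z : Set X) : Set (Set X) :=
  {W | W ⊆ Z ∧ W.Finite}

/-- `S` supports the function `f` on the domain `X` (Proposition 2.18'(2)):
for every `π` fixing `S` pointwise and every `x ∈ X`, `π • x ∈ X` and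
`f (π • x) = π • f x`. -/
def FnSupportsOn (A : Type*) {Y : Type*} [MulAction (finPerm A) Y]
    (X : Set Y) (S : Set A) (f : Y → Y) : Prop :=
  ∀ π : finPerm A, (∀ a ∈ S, π • a = a) → ∀ x ∈ X, π • x ∈ X ∧ f (π • x) = π • f x

/-- The least support of a function `f` with domain `X`. -/
noncomputable def fnSupp (A : Type*) {Y : Type*} [MulAction (finPerm A) Y]
    (X : Set Y) (f : Y → Y) : Set A :=
  ⋂₀ {S : Set A | S.Finite ∧ FnSupportsOn A X S f}

/-! Kleene iteration: the chain `∅ ⊆ f ∅ ⊆ f² ∅ ⊆ ⋯` consists of finite sets (by `NoInfUS`),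
each supported as a set by `supp f`. A finite set supported by `S` has all its elements supported
by `S`: otherwise swapping an atom of `supp z \ S` with a fresh atom would produce an element of the
set whose least support contains the fresh atom. Hence the union of the chain is uniformly
supported, so finite, the chain stabilises, and its limit is the least fixed point.
Least supports exist because, with infinitely many atoms, the finite supports of an element are
closed under intersection: the pointwise stabiliser of a finite set is generated by the swaps of
atoms outside it. -/

open MulAction Set Equiv

section Swaps

variable {A : Type*} [DecidableEq A]

theorem Equiv.Perm.mem_of_swap_mem {S : Set A} {M : Submonoid (Perm A)}
    (hswap : ∀ a b, a ∉ S → b ∉ S → swap a b ∈ M) {σ : Perm A}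
    (hσ : (fixedBy A σ)ᶜ.Finite) (hfix : ∀ a ∈ S, σ a = a) : σ ∈ M := by
  set T : Set (Perm A) := {τ | ∃ a b, a ∉ S ∧ b ∉ S ∧ a ≠ b ∧ swap a b = τ}
  have hT : ∀ τ ∈ T, τ.IsSwap := fun _ ⟨a, b, _, _, hab, hτ⟩ => ⟨a, b, hab, hτ.symm⟩
  have hσT : σ ∈ Subgroup.closure T := by
    refine (mem_closure_isSwap hT).mpr ⟨hσ, fun x => ?_⟩
    by_cases hx : σ x = x
    · rw [hx]; exact mem_orbit_self x
    have hxS : x ∉ S := fun h => hx (hfix x h)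
    have hσxS : σ x ∉ S := fun h => hx (σ.injective (hfix _ h))
    exact ⟨⟨swap x (σ x), Subgroup.subset_closure ⟨x, σ x, hxS, hσxS, Ne.symm hx, rfl⟩⟩,
      swap_apply_left x (σ x)⟩
  have hTM : T ∪ T⁻¹ ⊆ M := by
    rintro τ (⟨a, b, ha, hb, -, rfl⟩ | ⟨a, b, ha, hb, -, hτ⟩)
    · exact hswap a b ha hb
    · rw [← inv_inv τ, ← hτ, swap_inv]
      exact hswap a b ha hb
  rw [← Subgroup.mem_toSubmonoid, Subgroup.closure_toSubmonoid] at hσT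
  exact Submonoid.closure_le.mpr hTM hσT

theorem Equiv.Perm.swap_mem_of_inter [Infinite A] {S₁ S₂ : Set A} (h₁f : S₁.Finite)
    (h₂f : S₂.Finite) {M : Submonoid (Perm A)}
    (h₁ : ∀ a b, a ∉ S₁ → b ∉ S₁ → swap a b ∈ M) (h₂ : ∀ a b, a ∉ S₂ → b ∉ S₂ → swap a b ∈ M)
    (a b : A) (ha : a ∉ S₁ ∩ S₂) (hb : b ∉ S₁ ∩ S₂) : swap a b ∈ M := by
  obtain ⟨c, hc⟩ := (h₁f.union h₂f).infinite_compl.nonempty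
  rw [mem_compl_iff, mem_union, not_or] at hc
  have swap_c_mem : ∀ x, x ∉ S₁ ∩ S₂ → swap x c ∈ M := by
    intro x hx
    by_cases hx₁ : x ∈ S₁
    · exact h₂ x c (fun hx₂ => hx ⟨hx₁, hx₂⟩) hc.2
    · exact h₁ x c hx₁ hc.1
  exact SubmonoidClass.swap_mem_trans M (swap_c_mem a ha) (swap_comm b c ▸ swap_c_mem b hb)

def finPerm.swap (a b : A) : finPerm A := ⟨Equiv.swap a b, finite_compl_fixedBy_swap⟩

theorem finPerm.swap_mem_fixingSubmonoid {S : Set A} {a b : A} (ha : a ∉ S) (hb : b ∉ S) :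
    swap a b ∈ fixingSubmonoid (finPerm A) S :=
  (mem_fixingSubmonoid_iff _).mpr fun _ hc =>
    swap_apply_of_ne_of_ne (ne_of_mem_of_not_mem hc ha) (ne_of_mem_of_not_mem hc hb)

end Swaps

theorem finPerm.fixingSubmonoid_inter_le {A : Type*} [Infinite A] {S₁ S₂ : Set A} (h₁f : S₁.Finite)
    (h₂f : S₂.Finite) {H : Submonoid (finPerm A)} (h₁ : fixingSubmonoid (finPerm A) S₁ ≤ H)
    (h₂ : fixingSubmonoid (finPerm A) S₂ ≤ H) : fixingSubmonoid (finPerm A) (S₁ ∩ S₂) ≤ H := by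
  classical
  have swap_mem : ∀ {S : Set A}, fixingSubmonoid (finPerm A) S ≤ H →
      ∀ a b, a ∉ S → b ∉ S → Equiv.swap a b ∈ H.map (finPerm A).subtype :=
    fun hS a b ha hb => ⟨finPerm.swap a b, hS (finPerm.swap_mem_fixingSubmonoid ha hb), rfl⟩
  intro π hπ
  obtain ⟨π', hπ', hπ'π⟩ : (π : Perm A) ∈ H.map (finPerm A).subtype :=
    Perm.mem_of_swap_mem (Perm.swap_mem_of_inter h₁f h₂f (swap_mem h₁) (swap_mem h₂)) π.2
      ((mem_fixingSubmonoid_iff _).mp hπ)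
  rwa [← Subtype.ext hπ'π]

theorem Set.sInter_mem_of_inter_mem {α : Type*} {ℱ : Set (Set α)} (hne : ℱ.Nonempty)
    (hfin : ∀ S ∈ ℱ, S.Finite) (hinter : ∀ S₁ ∈ ℱ, ∀ S₂ ∈ ℱ, S₁ ∩ S₂ ∈ ℱ) : ⋂₀ ℱ ∈ ℱ := by
  obtain ⟨S₀, hS₀, hmin⟩ := (InvImage.wf Set.ncard wellFounded_lt).has_min ℱ hne
  have hS₀_le : ∀ S ∈ ℱ, S₀ ⊆ S := fun S hS =>
    (eq_of_subset_of_ncard_le inter_subset_left (not_lt.mp (hmin _ (hinter S₀ hS₀ S hS)))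
      (hfin S₀ hS₀)).symm.subset.trans inter_subset_right
  rwa [(sInter_subset_of_mem hS₀).antisymm (subset_sInter hS₀_le)]

theorem sInter_finite_fixingSubmonoid_le_mem {A : Type*} [Infinite A] {H : Submonoid (finPerm A)}
    (h : ∃ S : Set A, S.Finite ∧ fixingSubmonoid (finPerm A) S ≤ H) :
    ⋂₀ {S : Set A | S.Finite ∧ fixingSubmonoid (finPerm A) S ≤ H} ∈
      {S : Set A | S.Finite ∧ fixingSubmonoid (finPerm A) S ≤ H} :=
  sInter_mem_of_inter_mem h (fun _ hS => hS.1) fun _ h₁ _ h₂ =>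
    ⟨h₁.1.subset inter_subset_left, finPerm.fixingSubmonoid_inter_le h₁.1 h₂.1 h₁.2 h₂.2⟩

theorem MulAction.supports_iff_fixingSubmonoid_le {G α β : Type*} [Monoid G] [MulAction G α]
    [MulAction G β] {s : Set α} {b : β} :
    Supports G s b ↔ fixingSubmonoid G s ≤ stabilizerSubmonoid G b :=
  ⟨fun h g hg => h g ((mem_fixingSubmonoid_iff _).mp hg), fun h _ hg =>
    h ((mem_fixingSubmonoid_iff _).mpr fun _ ha => hg ha)⟩

def fnStabilizer (A : Type*) {Y : Type*} [MulAction (finPerm A) Y] (D : Set Y) (f : Y → Y) :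
    Submonoid (finPerm A) where
  carrier := {π | ∀ x ∈ D, π • x ∈ D ∧ f (π • x) = π • f x}
  one_mem' x hx := by simpa using hx
  mul_mem' {π σ} hπ hσ x hx := by
    obtain ⟨hσx, hfσ⟩ := hσ x hx
    obtain ⟨hπσx, hfπ⟩ := hπ _ hσx
    exact ⟨by rwa [mul_smul], by rw [mul_smul, hfπ, hfσ, mul_smul]⟩

theorem fnSupportsOn_iff_fixingSubmonoid_le {A Y : Type*} [MulAction (finPerm A) Y] {D : Set Y}
    {S : Set A} {f : Y → Y} :
    FnSupportsOn A D S f ↔ fixingSubmonoid (finPerm A) S ≤ fnStabilizer A D f :=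
  ⟨fun h _ hπ => h _ ((mem_fixingSubmonoid_iff _).mp hπ), fun h _ hπ =>
    h ((mem_fixingSubmonoid_iff _).mpr hπ)⟩

-- Mathlib's `Supports.smul` needs `SMulCommClass G G β`, which fails for a nonabelian `G`.
theorem MulAction.Supports.smul_group {G α β : Type*} [Group G] [MulAction G α] [MulAction G β]
    {s : Set α} {b : β} (g : G) (h : Supports G s b) : Supports G (g • s) (g • b) := by
  intro σ hσ
  have hconj : (g⁻¹ * σ * g) • b = b := h _ fun a ha => by
    rw [mul_smul, mul_smul, hσ (smul_mem_smul_set ha), inv_smul_smul]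
  calc σ • g • b = g • (g⁻¹ * σ * g) • b := by rw [mul_smul, mul_smul, smul_inv_smul]
    _ = g • b := by rw [hconj]

section LeastSupport

variable {A : Type*} [Infinite A] {Y : Type*} [MulAction (finPerm A) Y]

theorem supp_spec {x : Y} (hx : FinitelySupported A x) :
    (supp A x).Finite ∧ Supports (finPerm A) (supp A x) x := by
  simp only [supp, FinitelySupported, supports_iff_fixingSubmonoid_le] at hx ⊢
  exact sInter_finite_fixingSubmonoid_le_mem hx

theorem fnSupp_spec {D : Set Y} {f : Y → Y} (hf : ∃ S : Set A, S.Finite ∧ FnSupportsOn A D S f) :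
    (fnSupp A D f).Finite ∧ FnSupportsOn A D (fnSupp A D f) f := by
  simp only [fnSupp, fnSupportsOn_iff_fixingSubmonoid_le] at hf ⊢
  exact sInter_finite_fixingSubmonoid_le_mem hf

theorem smul_supp_subset {x : Y} (π : finPerm A) (hx : FinitelySupported A (π • x)) :
    π • supp A x ⊆ supp A (π • x) := by
  obtain ⟨hfin, hsupp⟩ := supp_spec hx
  rw [smul_set_subset_iff_subset_inv_smul_set]
  exact sInter_subset_of_mem ⟨hfin.smul_set, by simpa using hsupp.smul_group π⁻¹⟩

theorem supports_of_mem_of_finite (hinv : ∀ y : Y, FinitelySupported A y) {Z : Set Y}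
    (hZ : Z.Finite) {S : Set A} (hSfin : S.Finite) (hS : Supports (finPerm A) S Z) {z : Y}
    (hz : z ∈ Z) : Supports (finPerm A) S z := by
  classical
  refine (supp_spec (hinv z)).2.mono fun a ha => ?_
  by_contra haS
  obtain ⟨b, hb⟩ :=
    ((hZ.biUnion fun w _ => (supp_spec (hinv w)).1).union hSfin).infinite_compl.nonempty
  rw [mem_compl_iff, mem_union, not_or] at hb
  have hswapZ : finPerm.swap a b • Z = Z :=
    hS _ ((mem_fixingSubmonoid_iff _).mp (finPerm.swap_mem_fixingSubmonoid haS hb.2))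
  have hmem : finPerm.swap a b • z ∈ Z := hswapZ ▸ smul_mem_smul_set hz
  have hb_supp : b ∈ supp A (finPerm.swap a b • z) :=
    smul_supp_subset _ (hinv _) ⟨a, ha, swap_apply_left a b⟩
  exact hb.1 (mem_biUnion hmem hb_supp)

end LeastSupport

theorem Set.exists_succ_eq_of_monotone_of_finite_iUnion {α : Type*} {Z : ℕ → Set α}
    (hZ : Monotone Z) (hfin : (⋃ n, Z n).Finite) : ∃ n, Z (n + 1) = Z n := by
  have : Finite {W | W ⊆ ⋃ n, Z n} := hfin.finite_subsets.to_subtype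
  obtain ⟨m, n, hne, heq⟩ := Finite.exists_ne_map_eq_of_infinite fun n =>
    (⟨Z n, subset_iUnion Z n⟩ : {W | W ⊆ ⋃ n, Z n})
  replace heq : Z m = Z n := congrArg Subtype.val heq
  wlog hmn : m < n generalizing m n
  · exact this n m hne.symm heq.symm (hne.lt_or_gt.resolve_left hmn)
  exact ⟨m, le_antisymm (heq ▸ hZ (Nat.succ_le_of_lt hmn)) (hZ m.le_succ)⟩

section KleeneIteration

variable {A Y : Type*} [MulAction (finPerm A) Y] {X : Set Y} {f : Set Y → Set Y}

theorem iterate_empty_mem_usPowerset (hmap : ∀ Z ∈ usPowerset A X, f Z ∈ usPowerset A X)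
    (n : ℕ) : f^[n] ∅ ∈ usPowerset A X := by
  induction n with
  | zero => exact ⟨empty_subset X, ∅, finite_empty, fun _ h => h.elim⟩
  | succ n ih => rw [Function.iterate_succ_apply']; exact hmap _ ih

theorem monotone_iterate_empty (hmap : ∀ Z ∈ usPowerset A X, f Z ∈ usPowerset A X)
    (hmono : ∀ Z ∈ usPowerset A X, ∀ W ∈ usPowerset A X, Z ⊆ W → f Z ⊆ f W) :
    Monotone fun n => f^[n] ∅ := by
  refine monotone_nat_of_le_succ fun n => ?_
  induction n with
  | zero => exact empty_subset _
  | succ n ih =>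
    rw [Function.iterate_succ_apply' f n, Function.iterate_succ_apply' f (n + 1)]
    exact hmono _ (iterate_empty_mem_usPowerset hmap n) _
      (iterate_empty_mem_usPowerset hmap (n + 1)) ih

theorem iterate_empty_subset_of_fixed (hmap : ∀ Z ∈ usPowerset A X, f Z ∈ usPowerset A X)
    (hmono : ∀ Z ∈ usPowerset A X, ∀ W ∈ usPowerset A X, Z ⊆ W → f Z ⊆ f W)
    {Z : Set Y} (hZ : Z ∈ usPowerset A X) (hfix : f Z = Z) (n : ℕ) : f^[n] ∅ ⊆ Z := by
  induction n with
  | zero => exact empty_subset Z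
  | succ n ih =>
    rw [Function.iterate_succ_apply']
    exact hfix ▸ hmono _ (iterate_empty_mem_usPowerset hmap n) _ hZ ih

theorem supports_iterate_empty (hmap : ∀ Z ∈ usPowerset A X, f Z ∈ usPowerset A X)
    {S : Set A} (hS : FnSupportsOn A (usPowerset A X) S f) (n : ℕ) :
    Supports (finPerm A) S (f^[n] ∅) := by
  induction n with
  | zero => intro π _; exact smul_set_empty
  | succ n ih =>
    intro π hπ
    rw [Function.iterate_succ_apply', ← (hS π hπ _ (iterate_empty_mem_usPowerset hmap n)).2,
      ih π hπ]

end KleeneIteration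

theorem stmt5_general {A Y : Type*} [Infinite A] [MulAction (finPerm A) Y]
    (hinv : ∀ y : Y, FinitelySupported A y) (X : Set Y)
    (h : NoInfUS A X)
    (f : Set Y → Set Y)
    (hmap : ∀ Z ∈ usPowerset A X, f Z ∈ usPowerset A X)
    (hfs : ∃ S : Set A, S.Finite ∧ FnSupportsOn A (usPowerset A X) S f)
    (hmono : ∀ Z ∈ usPowerset A X, ∀ W ∈ usPowerset A X, Z ⊆ W → f Z ⊆ f W) :
    ∃ L ∈ usPowerset A X, f L = L ∧
      (∀ Z ∈ usPowerset A X, f Z = Z → L ⊆ Z) ∧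
      MulAction.Supports (finPerm A) (fnSupp A (usPowerset A X) f ∪ supp A X) L := by
  obtain ⟨hSfin, hS⟩ := fnSupp_spec hfs
  have mem := iterate_empty_mem_usPowerset hmap
  have supports := supports_iterate_empty hmap hS
  have hunif : UniformlySupported A (⋃ n, f^[n] ∅) := ⟨_, hSfin, fun z hz => by
    obtain ⟨n, hz⟩ := mem_iUnion.mp hz
    exact supports_of_mem_of_finite hinv (h _ (mem n).1 (mem n).2) hSfin (supports n) hz⟩
  obtain ⟨n, hn⟩ := exists_succ_eq_of_monotone_of_finite_iUnion (monotone_iterate_empty hmap hmono)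
    (h _ (iUnion_subset fun n => (mem n).1) hunif)
  refine ⟨f^[n] ∅, mem n, ?_, fun Z hZ hfix => iterate_empty_subset_of_fixed hmap hmono hZ hfix n,
    (supports n).mono subset_union_left⟩
  rwa [← Function.iterate_succ_apply' f n]

/-- a finitely supported inclusion-order-preserving self-map of `℘_us(X)`,
for `X` not FSM uniformly infinite, has a least fixed point supported by
`supp(f) ∪ supp(X)`. -/
theorem stmt5 {A Y : Type*} [Infinite A] [MulAction (finPerm A) Y]
    (hinv : ∀ y : Y, FinitelySupported A y) (X : Set Y)
    (hX : FinitelySupported A X) (h : NoInfUS A X)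
    (f : Set Y → Set Y)
    (hmap : ∀ Z ∈ usPowerset A X, f Z ∈ usPowerset A X)
    (hfs : ∃ S : Set A, S.Finite ∧ FnSupportsOn A (usPowerset A X) S f)
    (hmono : ∀ Z ∈ usPowerset A X, ∀ W ∈ usPowerset A X, Z ⊆ W → f Z ⊆ f W) :
    ∃ L ∈ usPowerset A X, f L = L ∧
      (∀ Z ∈ usPowerset A X, f Z = Z → L ⊆ Z) ∧
      MulAction.Supports (finPerm A) (fnSupp A (usPowerset A X) f ∪ supp A X) L :=
  stmt5_general hinv X h f hmap hfs hmono
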